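/- arXiv:0710.4335 — 2 statements merged into one kernel-verified Lean document; each statement's English description precedes it below -/
import Mathlib

section
/- Let V1 → V2 → V3 → V4 → V5 be a sequence of finite-dimensional k-vector spaces and linear maps a, b, c, d (a : V1 → V2, b : V2 → V3, c : V3 → V4, d : V4 → V5), exact at V2 (ker b = im a) and exact at V4 (ker d = im c), and suppose dim V5 = dim V1. Write r = dim V1, s = dim V2, t = dim V3, u = dim V4. Then r + t = max(s, u) if and only if either the sequence 0 → V1 → V2 → V3 → 0 is exact (a injective, b surjective, ker b = im a) or the sequence 0 → V3 → V4 → V5 → 0 is exact (c injective, d surjective, ker d = im c). -/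
theorem stmt2 {k : Type*} [Field k]
    {V1 V2 V3 V4 V5 : Type*}
    [AddCommGroup V1] [Module k V1] [FiniteDimensional k V1]
    [AddCommGroup V2] [Module k V2] [FiniteDimensional k V2]
    [AddCommGroup V3] [Module k V3] [FiniteDimensional k V3]
    [AddCommGroup V4] [Module k V4] [FiniteDimensional k V4]
    [AddCommGroup V5] [Module k V5] [FiniteDimensional k V5]
    (a : V1 →ₗ[k] V2) (b : V2 →ₗ[k] V3) (c : V3 →ₗ[k] V4) (d : V4 →ₗ[k] V5)
    (hb : LinearMap.ker b = LinearMap.range a)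
    (hd : LinearMap.ker d = LinearMap.range c)
    (h51 : Module.finrank k V5 = Module.finrank k V1) :
    Module.finrank k V1 + Module.finrank k V3 =
        max (Module.finrank k V2) (Module.finrank k V4) ↔
      ((Function.Injective a ∧ Function.Surjective b) ∨
        (Function.Injective c ∧ Function.Surjective d)) := by
  have ra := a.finrank_range_add_finrank_ker
  have rb := b.finrank_range_add_finrank_ker
  have rc := c.finrank_range_add_finrank_ker
  have rd := d.finrank_range_add_finrank_ker
  rw [hb] at rb
  rw [hd] at rd
  have hα : Module.finrank k (LinearMap.range a) ≤ Module.finrank k V1 :=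
    a.finrank_range_le
  have hβ : Module.finrank k (LinearMap.range b) ≤ Module.finrank k V3 :=
    Submodule.finrank_le _
  have hγ : Module.finrank k (LinearMap.range c) ≤ Module.finrank k V3 :=
    c.finrank_range_le
  have hδ : Module.finrank k (LinearMap.range d) ≤ Module.finrank k V5 :=
    Submodule.finrank_le _
  have ia : Function.Injective a ↔
      Module.finrank k (LinearMap.range a) = Module.finrank k V1 := by
    rw [← LinearMap.ker_eq_bot, ← Submodule.finrank_eq_zero (R := k)]
    omega
  have ic : Function.Injective c ↔
      Module.finrank k (LinearMap.range c) = Module.finrank k V3 := by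
    rw [← LinearMap.ker_eq_bot, ← Submodule.finrank_eq_zero (R := k)]
    omega
  have sb : Function.Surjective b ↔
      Module.finrank k (LinearMap.range b) = Module.finrank k V3 := by
    rw [← LinearMap.range_eq_top]
    constructor
    · intro h; rw [h]; exact finrank_top k V3
    · exact Submodule.eq_top_of_finrank_eq
  have sd : Function.Surjective d ↔
      Module.finrank k (LinearMap.range d) = Module.finrank k V5 := by
    rw [← LinearMap.range_eq_top]
    constructor
    · intro h; rw [h]; exact finrank_top k V5
    · exact Submodule.eq_top_of_finrank_eq
  rw [ia, ic, sb, sd]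
  omega
end

section
/- Let P ∈ ℤ[x_1,...,x_n] be a polynomial with P(e_i) > 0 for all i, and let c = x_1^{a_1}···x_n^{a_n} be a Laurent monomial with a ∈ ℤ^n, a ≠ 0. Then c·P (computed in the Laurent polynomial ring) is either not a polynomial, or it is a polynomial which fails the positivity condition, i.e. (c·P)(e_j) = 0 for some j. -/
/-- The Laurent polynomial ring `ℤ[x₁^{±1},...,xₙ^{±1}]` in `n` variables. -/
abbrev MvLaurent (n : ℕ) : Type := AddMonoidAlgebra ℤ (Fin n →₀ ℤ)

/-- The canonical inclusion of the polynomial ring into the Laurent polynomial ring. -/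
noncomputable def toLaurent (n : ℕ) : MvPolynomial (Fin n) ℤ →+* MvLaurent n :=
  AddMonoidAlgebra.mapDomainRingHom ℤ
    (Finsupp.mapRange.addMonoidHom (Nat.castAddMonoidHom ℤ))

/-- The point `e i = (1,...,1,0,1,...,1)` with `0` in the `i`-th position. -/
def evalPoint (n : ℕ) (i : Fin n) : Fin n → ℤ := fun j => if j = i then 0 else 1

/-!
Pick `j` with `a j ≠ 0`. If `a j > 0`, every monomial of `c·P` is divisible by `x_j`, so `c·P`
vanishes at `e_j`. If `a j < 0`, then `P(e_j) ≠ 0` forces a monomial of `P` free of `x_j`;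
multiplied by `c` it acquires a negative power of `x_j`, so `c·P` is not a polynomial.
-/

namespace MvPolynomial

theorem eval_eq_zero_of_forall_mem_support_ne_zero {σ R : Type*} [CommSemiring R]
    {x : σ → R} {j : σ} (hx : x j = 0) {p : MvPolynomial σ R}
    (hp : ∀ k ∈ p.support, k j ≠ 0) : eval x p = 0 := by
  rw [eval_eq]
  refine Finset.sum_eq_zero fun k hk => ?_
  have hxj : x j ^ k j = 0 := by rw [hx, zero_pow (hp k hk)]
  rw [Finset.prod_eq_zero (Finsupp.mem_support_iff.mpr (hp k hk)) hxj, mul_zero]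

theorem exists_mem_support_apply_eq_zero_of_eval_ne_zero {σ R : Type*} [CommSemiring R]
    {x : σ → R} {j : σ} (hx : x j = 0) {p : MvPolynomial σ R} (hp : eval x p ≠ 0) :
    ∃ k ∈ p.support, k j = 0 := by
  by_contra! h
  exact hp (eval_eq_zero_of_forall_mem_support_ne_zero hx h)

end MvPolynomial

noncomputable abbrev castExponent (n : ℕ) : (Fin n →₀ ℕ) →+ (Fin n →₀ ℤ) :=
  Finsupp.mapRange.addMonoidHom (Nat.castAddMonoidHom ℤ)

theorem castExponent_injective (n : ℕ) : Function.Injective (castExponent n) :=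
  Finsupp.mapRange_injective _ Nat.cast_zero Nat.cast_injective

theorem coeff_toLaurent_castExponent {n : ℕ} (p : MvPolynomial (Fin n) ℤ) (k : Fin n →₀ ℕ) :
    (toLaurent n p).coeff (castExponent n k) = p.coeff k :=
  Finsupp.mapDomain_apply (castExponent_injective n) _ k

theorem coeff_toLaurent_eq_zero_of_apply_neg {n : ℕ} (p : MvPolynomial (Fin n) ℤ)
    {m : Fin n →₀ ℤ} {j : Fin n} (hm : m j < 0) : (toLaurent n p).coeff m = 0 := by
  refine Finsupp.mapDomain_of_notMem_range _ _ ?_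
  rintro ⟨k, rfl⟩
  simp only [Finsupp.mapRange.addMonoidHom_apply, Finsupp.mapRange_apply] at hm
  exact (Nat.cast_nonneg _).not_gt hm

theorem eval_evalPoint_eq_zero_of_toLaurent_eq_single_mul {n : ℕ} {P Q : MvPolynomial (Fin n) ℤ}
    {a : Fin n →₀ ℤ} {r : ℤ} (hQ : toLaurent n Q = AddMonoidAlgebra.single a r * toLaurent n P)
    {j : Fin n} (hj : 0 < a j) : MvPolynomial.eval (evalPoint n j) Q = 0 := by
  refine MvPolynomial.eval_eq_zero_of_forall_mem_support_ne_zero (j := j) (by simp [evalPoint]) ?_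
  intro k hk hkj
  refine MvPolynomial.mem_support_iff.mp hk ?_
  rw [← coeff_toLaurent_castExponent, hQ, AddMonoidAlgebra.coeff_single_mul_apply,
    coeff_toLaurent_eq_zero_of_apply_neg P (j := j) (by simp [hkj, hj]), mul_zero]

theorem toLaurent_ne_single_mul_of_apply_neg {n : ℕ} {P : MvPolynomial (Fin n) ℤ} {j : Fin n}
    (hP : MvPolynomial.eval (evalPoint n j) P ≠ 0) {a : Fin n →₀ ℤ} (hj : a j < 0) {r : ℤ}
    (hr : r ≠ 0) (Q : MvPolynomial (Fin n) ℤ) :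
    toLaurent n Q ≠ AddMonoidAlgebra.single a r * toLaurent n P := by
  intro hQ
  obtain ⟨k, hk, hkj⟩ :=
    MvPolynomial.exists_mem_support_apply_eq_zero_of_eval_ne_zero (j := j) (by simp [evalPoint]) hP
  have hcoeff := congrArg (·.coeff (a + castExponent n k)) hQ
  simp only [AddMonoidAlgebra.coeff_single_mul_apply, neg_add_cancel_left,
    coeff_toLaurent_castExponent] at hcoeff
  rw [coeff_toLaurent_eq_zero_of_apply_neg Q (j := j) (by simp [hkj, hj])] at hcoeff
  exact mul_ne_zero hr (MvPolynomial.mem_support_iff.mp hk) hcoeff.symm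

/-- If `P` satisfies the positivity condition and `c = x^a` is a nontrivial Laurent
monomial, then `c·P` is either not a polynomial or fails the positivity condition. -/
theorem stmt6 {n : ℕ} (P : MvPolynomial (Fin n) ℤ)
    (hP : ∀ i : Fin n, 0 < MvPolynomial.eval (evalPoint n i) P)
    (a : Fin n →₀ ℤ) (ha : a ≠ 0) :
    ∀ Q : MvPolynomial (Fin n) ℤ,
      toLaurent n Q = (AddMonoidAlgebra.single a (1 : ℤ) : MvLaurent n) * toLaurent n P →
      ∃ j : Fin n, MvPolynomial.eval (evalPoint n j) Q = 0 := by
  intro Q hQ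
  obtain ⟨j, hj⟩ : ∃ j, a j ≠ 0 := by
    by_contra! h
    exact ha (Finsupp.ext h)
  rcases hj.lt_or_gt with hneg | hpos
  · exact absurd hQ (toLaurent_ne_single_mul_of_apply_neg (hP j).ne' hneg one_ne_zero Q)
  · exact ⟨j, eval_evalPoint_eq_zero_of_toLaurent_eq_single_mul hQ hpos⟩
end
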